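/- Define Q₁(τ₁,τ₂) = -(t/2+k/2+q)/(τ₁ - conj(τ₂)) - (t/2-k/2)/(τ₁ - τ₂) - i(t+q)/(2v₁), where v₁ = Im(τ₁). Then for every g = [[a,b],[c,d]] in SL(2,ℝ), Q₁(gτ₁, gτ₂) = (cτ₁+d)²·Q₁(τ₁, τ₂), i.e., Q₁ is covariant of weight 2 in τ₁. -/

import Mathlib

open Complex

/-- The auxiliary function `Q₁`. -/
noncomputable def Q₁ (t k : ℤ) (q : ℂ) (τ₁ τ₂ : ℂ) : ℂ :=
  -(((t : ℂ) / 2 + (k : ℂ) / 2 + q) / (τ₁ - (starRingEnd ℂ) τ₂))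
    - ((t : ℂ) / 2 - (k : ℂ) / 2) / (τ₁ - τ₂)
    - Complex.I * ((t : ℂ) + q) / (2 * (τ₁.im : ℂ))

/-!
Writing `-i/(2v₁) = 1/(τ₁ - τ̄₁)`, all three terms of `Q₁` are of the form `C/(τ₁ - w)` with
`w ∈ {τ̄₂, τ₂, τ̄₁}`. For `g ∈ SL(2)` one has
`1/(gz - gw) = (cz+d)²/(z-w) - c(cz+d)`, so each term is of weight two up to the anomaly
`-c(cτ₁+d)·C`, and the coefficients of `Q₁` are chosen so that the three anomalies cancel:
`(t/2+k/2+q) + (t/2-k/2) - (t+q) = 0`.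
-/

section Mobius

variable {K : Type*} [Field K] {a b c d z w : K}

theorem mobius_sub_mobius (hdet : a * d - b * c = 1) (hz : c * z + d ≠ 0) (hw : c * w + d ≠ 0) :
    (a * z + b) / (c * z + d) - (a * w + b) / (c * w + d)
      = (z - w) / ((c * z + d) * (c * w + d)) := by
  rw [div_sub_div _ _ hz hw]
  congr 1
  linear_combination (z - w) * hdet

theorem inv_mobius_sub_mobius (hdet : a * d - b * c = 1) (hz : c * z + d ≠ 0)
    (hw : c * w + d ≠ 0) (hzw : z ≠ w) :
    ((a * z + b) / (c * z + d) - (a * w + b) / (c * w + d))⁻¹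
      = (c * z + d) ^ 2 * (z - w)⁻¹ - c * (c * z + d) := by
  have hzw' : z - w ≠ 0 := sub_ne_zero.2 hzw
  rw [mobius_sub_mobius hdet hz hw, inv_div]
  field_simp
  ring

end Mobius

theorem ofReal_mul_add_ofReal_ne_zero {c d : ℝ} (hcd : c ≠ 0 ∨ d ≠ 0) {τ : ℂ}
    (hτ : τ.im ≠ 0) :
    (c : ℂ) * τ + d ≠ 0 := by
  intro h
  have hc : c = 0 := by
    simpa [hτ] using congrArg Complex.im h
  have hd : d = 0 := by
    simpa [hc] using congrArg Complex.re h
  exact hcd.elim (· hc) (· hd)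

theorem conj_mobius (a b c d : ℝ) (τ : ℂ) :
    starRingEnd ℂ (((a : ℂ) * τ + b) / ((c : ℂ) * τ + d))
      = ((a : ℂ) * starRingEnd ℂ τ + b) / ((c : ℂ) * starRingEnd ℂ τ + d) := by
  simp [map_div₀]

theorem ne_conj_of_im_pos {z w : ℂ} (hz : 0 < z.im) (hw : 0 < w.im) :
    z ≠ starRingEnd ℂ w := by
  intro h
  have := congrArg Complex.im h
  simp only [conj_im] at this
  linarith

theorem I_mul_div_two_mul_im (x τ : ℂ) :
    I * x / (2 * (τ.im : ℂ)) = -(x / (τ - starRingEnd ℂ τ)) := by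
  rw [sub_conj, ofReal_mul, ofReal_ofNat, mul_comm _ I, ← div_div x I, div_I]
  ring

theorem Q₁_eq_inv (t k : ℤ) (q : ℂ) (τ₁ τ₂ : ℂ) :
    Q₁ t k q τ₁ τ₂ =
      -((t : ℂ) / 2 + (k : ℂ) / 2 + q) * (τ₁ - starRingEnd ℂ τ₂)⁻¹
        - ((t : ℂ) / 2 - (k : ℂ) / 2) * (τ₁ - τ₂)⁻¹
        + ((t : ℂ) + q) * (τ₁ - starRingEnd ℂ τ₁)⁻¹ := by
  rw [Q₁, I_mul_div_two_mul_im]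
  simp only [div_eq_mul_inv]
  ring

/-- weight-2 covariance of `Q₁` in the first variable under the
diagonal Möbius action of `SL(2,ℝ)`. -/
theorem Q₁_weight_two_covariance
    (t k : ℤ) (q : ℂ) (a b c d : ℝ) (hdet : a * d - b * c = 1)
    (τ₁ τ₂ : ℂ) (h₁ : 0 < τ₁.im) (h₂ : 0 < τ₂.im) (hne : τ₁ ≠ τ₂) :
    Q₁ t k q (((a : ℂ) * τ₁ + b) / ((c : ℂ) * τ₁ + d))
             (((a : ℂ) * τ₂ + b) / ((c : ℂ) * τ₂ + d))
      = ((c : ℂ) * τ₁ + d) ^ 2 * Q₁ t k q τ₁ τ₂ := by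
  have hdetC : (a : ℂ) * d - b * c = 1 := by exact_mod_cast hdet
  have hcd : c ≠ 0 ∨ d ≠ 0 := by
    by_contra! h
    simp [h.1, h.2] at hdet
  have denom_ne {τ : ℂ} (hτ : 0 < τ.im) :
      (c : ℂ) * τ + d ≠ 0 ∧ (c : ℂ) * starRingEnd ℂ τ + d ≠ 0 :=
    ⟨ofReal_mul_add_ofReal_ne_zero hcd hτ.ne',
      ofReal_mul_add_ofReal_ne_zero hcd (by simpa using hτ.ne')⟩
  rw [Q₁_eq_inv, Q₁_eq_inv, conj_mobius, conj_mobius,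
    inv_mobius_sub_mobius hdetC (denom_ne h₁).1 (denom_ne h₂).2 (ne_conj_of_im_pos h₁ h₂),
    inv_mobius_sub_mobius hdetC (denom_ne h₁).1 (denom_ne h₂).1 hne,
    inv_mobius_sub_mobius hdetC (denom_ne h₁).1 (denom_ne h₁).2 (ne_conj_of_im_pos h₁ h₁)]
  ring
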